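/- Let n ≥ 1 and let Φ : (0,∞) → (0,∞) be an increasing function. The class L(𝔾ⁿ) \ [Φ(L)](𝔾ⁿ) is non-empty if and only if Φ is non-regular; that is, there exists an integrable f supported in 𝔾ⁿ with ∫_{{f≠0}} Φ(|f|/h) = ∞ for every h ≥ 1 if and only if limsup_{t→∞} Φ(t)/t = ∞. -/

import Mathlib

open MeasureTheory Set Filter Topology Metric ENNReal

noncomputable section

/-- Euclidean space `ℝⁿ`. -/
abbrev EucSp (n : ℕ) := EuclideanSpace ℝ (Fin n)

/-- The open unit cube `𝔾ⁿ = (0,1)ⁿ`. -/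
def Gcube (n : ℕ) : Set (EucSp n) := {x | ∀ j, x j ∈ Set.Ioo (0:ℝ) 1}

/-- A "basis mapping": to every point it assigns a family of sets. -/
abbrev BasisMap (n : ℕ) := EucSp n → Set (Set (EucSp n))

/-- `B` is a differentiation basis: every `R ∈ B(x)` is a bounded measurable set of positive
measure containing `x`, and `B(x)` contains sets of arbitrarily small diameter. -/
def IsDiffBasis {n : ℕ} (B : BasisMap n) : Prop :=
  ∀ x : EucSp n,
    (∀ R ∈ B x, x ∈ R ∧ Bornology.IsBounded R ∧ MeasurableSet R ∧ 0 < volume R) ∧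
    ∀ ε : ℝ, 0 < ε → ∃ R ∈ B x, Metric.diam R < ε

/-- Translation invariance: `B(x) = {x + I : I ∈ B(0)}`. -/
def IsTIBasis {n : ℕ} (B : BasisMap n) : Prop :=
  ∀ x : EucSp n, B x = (fun I => (fun y => x + y) '' I) '' B 0

/-- The truncated maximal operator `M_B^{(r)} f (x)`. -/
def maxTrunc {n : ℕ} (B : BasisMap n) (r : ℝ) (f : EucSp n → ℝ) (x : EucSp n) : ℝ≥0∞ :=
  ⨆ (R : Set (EucSp n)) (_ : R ∈ B x ∧ Metric.diam R < r),
    (∫⁻ y in R, ENNReal.ofReal |f y|) / volume R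

/-- The (untruncated) maximal operator `M_B f (x)`. -/
def maxOp {n : ℕ} (B : BasisMap n) (f : EucSp n → ℝ) (x : EucSp n) : ℝ≥0∞ :=
  ⨆ (R : Set (EucSp n)) (_ : R ∈ B x), (∫⁻ y in R, ENNReal.ofReal |f y|) / volume R

/-- The upper derivative `D̄_B(∫f, x)` equals `+∞`. -/
def upperDerivInfinite {n : ℕ} (B : BasisMap n) (f : EucSp n → ℝ) (x : EucSp n) : Prop :=
  ∀ M : ℝ, ∀ δ : ℝ, 0 < δ →
    ∃ R ∈ B x, Metric.diam R < δ ∧ M * (volume R).toReal < ∫ y in R, f y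

/-- The family `W_m` of dyadic intervals of order `m`. -/
def dyadicW {n : ℕ} (m : Fin n → ℕ) : Set (Set (EucSp n)) :=
  {S | ∃ k : Fin n → ℤ, S =
    {x : EucSp n | ∀ j, (k j : ℝ) / 2 ^ (m j) < x j ∧ x j < ((k j : ℝ) + 1) / 2 ^ (m j)}}

/-- The family `H_m` of all unions of dyadic intervals of order `m`. -/
def dyadicH {n : ℕ} (m : Fin n → ℕ) : Set (Set (EucSp n)) :=
  {S | ∃ T ⊆ dyadicW m, S = ⋃₀ T}

/-- `W_m* = {Q ∈ W_m : Q ⊆ 𝔾ⁿ}`. -/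
def dyadicWStar {n : ℕ} (m : Fin n → ℕ) : Set (Set (EucSp n)) :=
  {S | S ∈ dyadicW m ∧ S ⊆ Gcube n}

/-- `H_m* = {E ∈ H_m : E ⊆ 𝔾ⁿ}`. -/
def dyadicHStar {n : ℕ} (m : Fin n → ℕ) : Set (Set (EucSp n)) :=
  {S | S ∈ dyadicH m ∧ S ⊆ Gcube n}

/-- An (open) `n`-dimensional interval. -/
def IsOpenInterval {n : ℕ} (Q : Set (EucSp n)) : Prop :=
  ∃ a b : Fin n → ℝ, Q = {x : EucSp n | ∀ j, a j < x j ∧ x j < b j}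

/-- The function `h·χ_E`. -/
def indFun {n : ℕ} (E : Set (EucSp n)) (h : ℝ) : EucSp n → ℝ :=
  E.indicator fun _ => h

/-- The `M_Φ`-property with the given constants `c` and `c(·)`. -/
def MPhiPropertyWith {n : ℕ} (Λ : Set (BasisMap n)) (Φ : ℝ → ℝ) (c : ℝ) (ch : ℝ → ℝ) : Prop :=
  ∀ h : ℝ, 1 < h → ∀ ε : ℝ, 0 < ε →
    ∃ (E : Set (EucSp n)) (P : BasisMap n → Set (EucSp n)) (Q : Set (EucSp n)),
      MeasurableSet E ∧ 0 < volume E ∧ IsOpenInterval Q ∧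
      (∀ B ∈ Λ, P B ⊆ {x | 1 < maxTrunc B ε (indFun E h) x}) ∧
      (∃ m : Fin n → ℕ, ∀ B ∈ Λ, P B ∈ dyadicH m) ∧
      (∀ B ∈ Λ, ENNReal.ofReal (c * Φ h) * volume E ≤ volume (P B)) ∧
      E ⊆ Q ∧ (∀ B ∈ Λ, P B ⊆ Q) ∧ Metric.diam Q < ε ∧
      ENNReal.ofReal (ch h) * volume Q ≤ volume E

/-- The `M_Φ`-property. -/
def MPhiProperty {n : ℕ} (Λ : Set (BasisMap n)) (Φ : ℝ → ℝ) : Prop :=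
  ∃ c : ℝ, 0 < c ∧ ∃ ch : ℝ → ℝ, (∀ h : ℝ, 1 < h → ch h ∈ Set.Ioo (0:ℝ) 1) ∧
    MPhiPropertyWith Λ Φ c ch

/-- `f ∈ L(𝔾ⁿ)`: integrable and supported in the unit cube. -/
def MemL {n : ℕ} (f : EucSp n → ℝ) : Prop :=
  Integrable f ∧ {x | f x ≠ 0} ⊆ Gcube n

/-- `Φ` is non-regular: `limsup_{t→∞} Φ(t)/t = ∞`. -/
def NonRegular (Φ : ℝ → ℝ) : Prop :=
  ∀ M T : ℝ, ∃ t : ℝ, T < t ∧ 0 < t ∧ M * t < Φ t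

/-- `Φ` satisfies the `Δ₂`-condition at infinity. -/
def Delta2 (Φ : ℝ → ℝ) : Prop :=
  ∃ c τ : ℝ, 0 < c ∧ 0 < τ ∧ ∀ t : ℝ, τ < t → Φ (2 * t) ≤ c * Φ t

/-- The `γ`-rotated basis `B(γ)`. -/
def rotateBasis {n : ℕ} (B : BasisMap n) (γ : EucSp n ≃ₗᵢ[ℝ] EucSp n) : BasisMap n :=
  fun x => (fun R => (fun y => x + γ (y - x)) '' R) '' B x

/-- `γ` is a rotation (orientation-preserving linear isometry). -/
def IsRotation {n : ℕ} (γ : EucSp n ≃ₗᵢ[ℝ] EucSp n) : Prop :=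
  LinearMap.det (γ.toLinearEquiv : EucSp n →ₗ[ℝ] EucSp n) = 1

/-- The function `Φ_B(h) = lim_{t→∞} limsup_{r→0} |{M_B^{(tr)}(hχ_{V_r}) > 1}| / |V_r|`. -/
def PhiB {n : ℕ} (B : BasisMap n) (h : ℝ) : ℝ≥0∞ :=
  Filter.limsup (fun t : ℝ =>
    Filter.limsup (fun r : ℝ =>
      volume {x : EucSp n | 1 < maxTrunc B (t * r) (indFun (Metric.ball (0 : EucSp n) r) h) x}
        / volume (Metric.ball (0 : EucSp n) r)) (𝓝[>] (0:ℝ))) Filter.atTop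

/-- The basis `𝐈ₙᵏ` of intervals with at most `k` distinct edge lengths. -/
def baseInk (n k : ℕ) : BasisMap n := fun x =>
  {R | ∃ a b : Fin n → ℝ,
    R = {y : EucSp n | ∀ j, a j < y j ∧ y j < b j} ∧ (∀ j, a j < x j ∧ x j < b j) ∧
    (Finset.image (fun j => b j - a j) Finset.univ).card ≤ k}

/-- `f` belongs to the Orlicz class `ψ(L)(𝔾ⁿ)`. -/
def MemPsiL {n : ℕ} (ψ : ℝ → ℝ) (f : EucSp n → ℝ) : Prop :=
  Measurable f ∧ {x | f x ≠ 0} ⊆ Gcube n ∧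
    ∫⁻ x in {x | f x ≠ 0}, ENNReal.ofReal (ψ |f x|) < ⊤

/-- The Luxemburg distance on `ψ(L)(𝔾ⁿ)`. -/
def luxDist {n : ℕ} (ψ : ℝ → ℝ) (f g : EucSp n → ℝ) : ℝ :=
  sInf {lam : ℝ | 0 < lam ∧
    ∫⁻ x in {x | f x ≠ g x}, ENNReal.ofReal (ψ (|f x - g x| / lam)) ≤ 1}

/-- `f ∈ S_{Δ(B)}`: an integrable function supported in `𝔾ⁿ` whose integral has upper
derivative `+∞` a.e. on `𝔾ⁿ` with respect to every rotation of `B`. -/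
def MemSDeltaB {n : ℕ} (B : BasisMap n) (f : EucSp n → ℝ) : Prop :=
  Integrable f ∧ {x | f x ≠ 0} ⊆ Gcube n ∧
    ∀ γ : EucSp n ≃ₗᵢ[ℝ] EucSp n, IsRotation γ →
      ∀ᵐ x ∂(volume : Measure (EucSp n)), x ∈ Gcube n →
        upperDerivInfinite (rotateBasis B γ) f x

/-- `T` is of the first Baire category in the space `ψ(L)(𝔾ⁿ)` with the Luxemburg metric:
`T` is a countable union of sets `F k`, each of which is nowhere dense (every ball of the
space contains a ball disjoint from `F k`). -/
def FirstCategoryInPsiL {n : ℕ} (ψ : ℝ → ℝ) (T : Set (EucSp n → ℝ)) : Prop :=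
  ∃ F : ℕ → Set (EucSp n → ℝ), T ⊆ (⋃ k, F k) ∧
    ∀ k : ℕ, ∀ f : EucSp n → ℝ, MemPsiL ψ f → ∀ ε : ℝ, 0 < ε →
      ∃ g : EucSp n → ℝ, MemPsiL ψ g ∧ luxDist ψ f g < ε ∧
        ∃ δ : ℝ, 0 < δ ∧ ∀ u : EucSp n → ℝ, MemPsiL ψ u → luxDist ψ g u < δ → u ∉ F k

/-!
If `Φ t ≤ M t` for large `t`, then `Φ (|f|) ≤ C + M |f|` on `{f ≠ 0}`, and this set has finite
measure, so every integrable `f` supported in the cube belongs to `Φ(L)`.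

Conversely, if `Φ` is non-regular pick `t_k ≥ 1` with `Φ (t_k) > (k+1) 2^(k+1) t_k` and put
`c_k = ((k+1) 2^(k+1) t_k)⁻¹`. Since `∑ c_k ≤ 1`, the cube contains disjoint slabs `A_k` with
`|A_k| = c_k`. The function `f = ∑ (k+1) t_k 𝟙_{A_k}` has `∫ f = ∑ 2^-(k+1) < ∞`, but for
`h ≥ 1` every slab with `k + 1 ≥ h` contributes `∫_{A_k} Φ (f / h) ≥ Φ (t_k) c_k ≥ 1`.
-/

open Function

section Regular

variable {α : Type*} [MeasurableSpace α] {μ : Measure α} {Φ : ℝ → ℝ}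

lemma exists_le_add_mul_of_not_nonRegular (hΦ : MonotoneOn Φ (Ioi 0)) (hreg : ¬ NonRegular Φ) :
    ∃ C M : ℝ, 0 ≤ M ∧ ∀ t, 0 < t → Φ t ≤ C + M * t := by
  simp only [NonRegular, not_forall, not_exists, not_and, not_lt] at hreg
  obtain ⟨M, T, hM⟩ := hreg
  set T' := max T 1
  refine ⟨max (Φ T') 0, max M 0, le_max_right _ _, fun t ht => ?_⟩
  rcases le_or_gt t T' with htT | hTt
  · have hΦt : Φ t ≤ Φ T' := hΦ ht (zero_lt_one.trans_le (le_max_right T 1) : (0 : ℝ) < T') htT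
    nlinarith [le_max_left (Φ T') 0, le_max_right M 0]
  · have hΦt : Φ t ≤ M * t := hM t ((le_max_left _ _).trans_lt hTt) ht
    nlinarith [le_max_right (Φ T') 0, le_max_left M 0]

theorem setLIntegral_lt_top_of_not_nonRegular (hΦ : MonotoneOn Φ (Ioi 0))
    (hreg : ¬ NonRegular Φ) {f : α → ℝ} (hf : Integrable f μ) (hμf : μ {x | f x ≠ 0} ≠ ⊤) :
    ∫⁻ x in {x | f x ≠ 0}, ENNReal.ofReal (Φ |f x|) ∂μ < ⊤ := by
  obtain ⟨C, M, hM, hΦCM⟩ := exists_le_add_mul_of_not_nonRegular hΦ hreg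
  set s := {x | f x ≠ 0}
  have hs : NullMeasurableSet s μ :=
    hf.aemeasurable.nullMeasurable (measurableSet_singleton 0).compl
  have hbound : ∀ᵐ x ∂μ.restrict s,
      ENNReal.ofReal (Φ |f x|) ≤ ENNReal.ofReal C + ENNReal.ofReal M * ENNReal.ofReal |f x| :=
    (ae_restrict_mem₀ hs).mono fun x hx => by
      rw [← ENNReal.ofReal_mul hM]
      exact (ENNReal.ofReal_le_ofReal (hΦCM _ (abs_pos.2 hx))).trans ENNReal.ofReal_add_le
  calc ∫⁻ x in s, ENNReal.ofReal (Φ |f x|) ∂μ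
      ≤ ∫⁻ x in s, ENNReal.ofReal C + ENNReal.ofReal M * ENNReal.ofReal |f x| ∂μ :=
        lintegral_mono_ae hbound
    _ = ENNReal.ofReal C * μ s + ENNReal.ofReal M * ∫⁻ x in s, ENNReal.ofReal |f x| ∂μ := by
        rw [lintegral_add_left measurable_const, setLIntegral_const,
          lintegral_const_mul' _ _ ENNReal.ofReal_ne_top]
    _ ≤ ENNReal.ofReal C * μ s + ENNReal.ofReal M * ∫⁻ x, ENNReal.ofReal |f x| ∂μ := by
        gcongr
        exact Measure.restrict_le_self
    _ < ⊤ := by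
        have := hf.abs.lintegral_lt_top
        finiteness

end Regular

theorem NonRegular.exists_weights {Φ : ℝ → ℝ} (hΦ : NonRegular Φ) :
    ∃ t c : ℕ → ℝ, (∀ k, 0 < t k) ∧ (∀ k, 0 ≤ c k) ∧ (∀ k, ∑ i ∈ Finset.range k, c i ≤ 1) ∧
      Summable (fun k => (k + 1) * t k * c k) ∧ ∀ k, 1 ≤ Φ (t k) * c k := by
  choose t ht1 ht0 hΦt using fun k : ℕ => hΦ ((k + 1) * 2 ^ (k + 1)) 1
  set c : ℕ → ℝ := fun k => ((k + 1) * 2 ^ (k + 1) * t k)⁻¹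
  have hw (k : ℕ) : 0 < (k + 1 : ℝ) * 2 ^ (k + 1) * t k := by have := ht0 k; positivity
  have hvc (k : ℕ) : (k + 1) * t k * c k = (1 / 2) ^ (k + 1) := by
    have := ht0 k
    simp only [c]
    field_simp
    rw [← mul_pow]
    norm_num
  have hc_le (k : ℕ) : c k ≤ (1 / 2) ^ (k + 1) := by
    rw [← hvc]
    refine le_mul_of_one_le_left (inv_pos.2 (hw k)).le ?_
    nlinarith [ht1 k, (k.cast_nonneg : (0 : ℝ) ≤ k)]
  refine ⟨t, c, ht0, fun k => (inv_pos.2 (hw k)).le, fun k => ?_,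
    (summable_geometric_two.mul_left (1 / 2)).congr fun k => by rw [hvc, pow_succ'], fun k => ?_⟩
  · calc ∑ i ∈ Finset.range k, c i ≤ ∑ i ∈ Finset.range k, (1 / 2 : ℝ) ^ (i + 1) :=
          Finset.sum_le_sum fun i _ => hc_le i
      _ = 1 / 2 * ∑ i ∈ Finset.range k, (1 / 2 : ℝ) ^ i := by
          simp only [Finset.mul_sum, pow_succ']
      _ ≤ 1 := by linarith [sum_geometric_two_le k]
  · rw [← div_eq_mul_inv, one_le_div (hw k)]
    exact (hΦt k).le

section Cube

variable {n : ℕ}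

lemma setOf_forall_coord_mem_eq_preimage (s : Fin n → Set ℝ) :
    {x : EucSp n | ∀ j, x j ∈ s j} = (MeasurableEquiv.toLp 2 (Fin n → ℝ)).symm ⁻¹' univ.pi s := by
  ext x
  simp only [mem_ofPred_eq, mem_preimage, mem_univ_pi]
  rfl

lemma measurableSet_setOf_forall_coord_mem {s : Fin n → Set ℝ} (hs : ∀ j, MeasurableSet (s j)) :
    MeasurableSet {x : EucSp n | ∀ j, x j ∈ s j} := by
  rw [setOf_forall_coord_mem_eq_preimage]
  exact (MeasurableSet.univ_pi hs).preimage (MeasurableEquiv.measurable _)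

lemma volume_setOf_forall_coord_mem {s : Fin n → Set ℝ} (hs : ∀ j, MeasurableSet (s j)) :
    volume {x : EucSp n | ∀ j, x j ∈ s j} = ∏ j, volume (s j) := by
  rw [setOf_forall_coord_mem_eq_preimage,
    (EuclideanSpace.volume_preserving_symm_measurableEquiv_toLp (Fin n)).measure_preimage
      (MeasurableSet.univ_pi hs).nullMeasurableSet, volume_pi_pi]

lemma volume_Gcube : volume (Gcube n) = 1 := by
  rw [Gcube, volume_setOf_forall_coord_mem fun _ => measurableSet_Ioo]
  simp

/-- `{x ∈ 𝔾ⁿ | x j ∈ s}` for `s ⊆ (0,1)`, written as a coordinate box. -/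
def cubeSlab (j : Fin n) (s : Set ℝ) : Set (EucSp n) :=
  {x | ∀ i, x i ∈ update (fun _ => Ioo (0 : ℝ) 1) j s i}

lemma cubeSlab_subset_Gcube {j : Fin n} {s : Set ℝ} (hs : s ⊆ Ioo 0 1) :
    cubeSlab j s ⊆ Gcube n := by
  intro x hx i
  obtain ⟨hxj, hx⟩ := (forall_update_iff _ fun i S => x i ∈ S).1 hx
  rcases eq_or_ne i j with rfl | hij
  exacts [hs hxj, hx i hij]

lemma measurableSet_cubeSlab (j : Fin n) {s : Set ℝ} (hs : MeasurableSet s) :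
    MeasurableSet (cubeSlab j s) :=
  measurableSet_setOf_forall_coord_mem <|
    (forall_update_iff _ fun _ => MeasurableSet).2 ⟨hs, fun _ _ => measurableSet_Ioo⟩

lemma volume_cubeSlab (j : Fin n) {s : Set ℝ} (hs : MeasurableSet s) :
    volume (cubeSlab j s) = volume s := by
  classical
  rw [cubeSlab, volume_setOf_forall_coord_mem <|
      (forall_update_iff _ fun _ => MeasurableSet).2 ⟨hs, fun _ _ => measurableSet_Ioo⟩,
    Finset.prod_congr rfl fun i _ => apply_update (fun _ => volume) _ j s i,
    Finset.prod_update_of_mem (Finset.mem_univ j)]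
  simp

lemma disjoint_cubeSlab (j : Fin n) {s t : Set ℝ} (hst : Disjoint s t) :
    Disjoint (cubeSlab j s) (cubeSlab j t) :=
  Set.disjoint_left.2 fun x hs ht => hst.ne_of_mem (by simpa using hs j) (by simpa using ht j) rfl

end Cube

theorem exists_disjoint_subsets_Gcube {n : ℕ} (j : Fin n) {c : ℕ → ℝ} (hc : ∀ k, 0 ≤ c k)
    (hsum : ∀ k, ∑ i ∈ Finset.range k, c i ≤ 1) :
    ∃ A : ℕ → Set (EucSp n), (∀ k, MeasurableSet (A k)) ∧ (∀ k, A k ⊆ Gcube n) ∧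
      Pairwise (Disjoint on A) ∧ ∀ k, volume (A k) = ENNReal.ofReal (c k) := by
  set d : ℕ → ℝ := fun k => ∑ i ∈ Finset.range k, c i
  have hd : Monotone d :=
    monotone_nat_of_le_succ fun k => by simp [d, Finset.sum_range_succ, hc k]
  refine ⟨fun k => cubeSlab j (Ioo (d k) (d (k + 1))),
    fun k => measurableSet_cubeSlab j measurableSet_Ioo,
    fun k => cubeSlab_subset_Gcube (Ioo_subset_Ioo (Finset.sum_nonneg fun i _ => hc i) (hsum _)),
    fun k l hkl => disjoint_cubeSlab j (hd.pairwise_disjoint_on_Ioo_succ hkl), fun k => ?_⟩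
  rw [volume_cubeSlab j measurableSet_Ioo, Real.volume_Ioo]
  simp only [d, Finset.sum_range_succ, add_sub_cancel_left]

section DisjointIndicators

variable {α : Type*} {A : ℕ → Set α} {v : ℕ → ℝ} {x : α}

lemma tsum_indicator_apply_of_mem (hA : Pairwise (Disjoint on A)) {k : ℕ} (hx : x ∈ A k) :
    ∑' i, (A i).indicator (fun _ => v i) x = v k := by
  rw [tsum_eq_single k fun i hik =>
    indicator_of_notMem (fun hxi => (hA hik).ne_of_mem hxi hx rfl) _, indicator_of_mem hx]

lemma tsum_indicator_apply_of_notMem (hx : x ∉ ⋃ i, A i) :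
    ∑' i, (A i).indicator (fun _ => v i) x = 0 := by
  simp only [mem_iUnion, not_exists] at hx
  simp [indicator_of_notMem (hx _)]

lemma setOf_tsum_indicator_ne_zero (hA : Pairwise (Disjoint on A)) (hv : ∀ k, v k ≠ 0) :
    {x | ∑' i, (A i).indicator (fun _ => v i) x ≠ 0} = ⋃ i, A i := by
  ext x
  by_cases hx : x ∈ ⋃ i, A i
  · obtain ⟨k, hk⟩ := mem_iUnion.1 hx
    simp [tsum_indicator_apply_of_mem hA hk, hv k, hx]
  · simp [tsum_indicator_apply_of_notMem hx, hx]

lemma setLIntegral_iUnion_comp_tsum_indicator [MeasurableSpace α] {μ : Measure α}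
    (hAm : ∀ k, MeasurableSet (A k)) (hA : Pairwise (Disjoint on A)) (G : ℝ → ℝ≥0∞) :
    ∫⁻ x in ⋃ i, A i, G (∑' i, (A i).indicator (fun _ => v i) x) ∂μ = ∑' k, G (v k) * μ (A k) := by
  rw [lintegral_iUnion hAm hA]
  congr 1 with k
  rw [setLIntegral_congr_fun (hAm k) fun x hx => by rw [tsum_indicator_apply_of_mem hA hx],
    setLIntegral_const]

end DisjointIndicators

lemma ENNReal.tsum_eq_top_of_eventually_one_le {a : ℕ → ℝ≥0∞} (ha : ∀ᶠ k in atTop, 1 ≤ a k) :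
    ∑' k, a k = ⊤ := by
  by_contra hfin
  obtain ⟨N, hN⟩ := eventually_atTop.1 ha
  exact Ici_infinite N ((ENNReal.finite_const_le_of_tsum_ne_top hfin one_ne_zero).subset hN)

theorem exists_integrable_forall_setLIntegral_eq_top {α : Type*} [MeasurableSpace α]
    {μ : Measure α} {Φ : ℝ → ℝ} (hΦ : MonotoneOn Φ (Ioi 0)) {A : ℕ → Set α}
    (hAm : ∀ k, MeasurableSet (A k)) (hA : Pairwise (Disjoint on A)) {t c : ℕ → ℝ}
    (ht : ∀ k, 0 < t k) (hc : ∀ k, 0 ≤ c k) (hμA : ∀ k, μ (A k) = ENNReal.ofReal (c k))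
    (hsum : Summable fun k => (k + 1) * t k * c k) (hΦt : ∀ k, 1 ≤ Φ (t k) * c k) :
    ∃ f : α → ℝ, Integrable f μ ∧ {x | f x ≠ 0} = ⋃ k, A k ∧
      ∀ h : ℝ, 1 ≤ h → ∫⁻ x in {x | f x ≠ 0}, ENNReal.ofReal (Φ (|f x| / h)) ∂μ = ⊤ := by
  set v : ℕ → ℝ := fun k => (k + 1) * t k
  have hv : ∀ k, 0 < v k := fun k => mul_pos k.cast_add_one_pos (ht k)
  set f : α → ℝ := fun x => ∑' i, (A i).indicator (fun _ => v i) x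
  have hsupp : {x | f x ≠ 0} = ⋃ k, A k := setOf_tsum_indicator_ne_zero hA fun k => (hv k).ne'
  have hlint (G : ℝ → ℝ≥0∞) : ∫⁻ x in {x | f x ≠ 0}, G (f x) ∂μ = ∑' k, G (v k) * μ (A k) := by
    rw [hsupp, setLIntegral_iUnion_comp_tsum_indicator hAm hA]
  refine ⟨f, ⟨(Measurable.tsum fun k => measurable_const.indicator (hAm k)).aestronglyMeasurable,
    ?_⟩, hsupp, fun h hh => ?_⟩
  · rw [hasFiniteIntegral_iff_enorm, ← setLIntegral_eq_of_support_subset (s := {x | f x ≠ 0})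
      fun x hx => by simpa [enorm_eq_zero] using hx, hlint]
    simp_rw [hμA, Real.enorm_eq_ofReal_abs, abs_of_pos (hv _), ← ENNReal.ofReal_mul (hv _).le,
      ← ENNReal.ofReal_tsum_of_nonneg (fun k => mul_nonneg (hv k).le (hc k)) hsum]
    exact ENNReal.ofReal_lt_top
  · obtain ⟨N, hN⟩ := exists_nat_ge h
    rw [hlint fun y => ENNReal.ofReal (Φ (|y| / h))]
    refine ENNReal.tsum_eq_top_of_eventually_one_le <| (eventually_ge_atTop N).mono fun k hk => ?_
    have hhk : h ≤ k + 1 := by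
      have : (N : ℝ) ≤ k := by exact_mod_cast hk
      linarith
    have hth : t k ≤ |v k| / h := by
      rw [abs_of_pos (hv k), le_div_iff₀ (by linarith)]
      nlinarith [ht k]
    have hΦle := hΦ (ht k) ((ht k).trans_le hth) hth
    have hΦpos : 0 < Φ (t k) := by nlinarith [hΦt k, hc k]
    rw [hμA, ← ENNReal.ofReal_mul (hΦpos.le.trans hΦle), ← ENNReal.ofReal_one]
    exact ENNReal.ofReal_le_ofReal ((hΦt k).trans (mul_le_mul_of_nonneg_right hΦle (hc k)))

theorem stmt19_general (n : ℕ) (hn : 1 ≤ n)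
    (Φ : ℝ → ℝ) (hΦmono : MonotoneOn Φ (Set.Ioi 0)) :
    (∃ f : EucSp n → ℝ, Integrable f ∧ {x | f x ≠ 0} ⊆ Gcube n ∧
        ∀ h : ℝ, 1 ≤ h → ∫⁻ x in {x | f x ≠ 0}, ENNReal.ofReal (Φ (|f x| / h)) = ⊤) ↔
      NonRegular Φ := by
  constructor
  · rintro ⟨f, hf, hsupp, htop⟩
    by_contra hreg
    have hfin : volume {x | f x ≠ 0} ≠ ⊤ :=
      ne_top_of_le_ne_top (by simp [volume_Gcube]) (measure_mono hsupp)
    have htop₁ := htop 1 le_rfl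
    simp only [div_one] at htop₁
    exact (setLIntegral_lt_top_of_not_nonRegular hΦmono hreg hf hfin).ne htop₁
  · intro hNR
    obtain ⟨t, c, ht, hc, hsum, hsummable, hΦt⟩ := hNR.exists_weights
    obtain ⟨A, hAm, hAG, hA, hvol⟩ := exists_disjoint_subsets_Gcube ⟨0, hn⟩ hc hsum
    obtain ⟨f, hf, hsupp, htop⟩ :=
      exists_integrable_forall_setLIntegral_eq_top hΦmono hAm hA ht hc hvol hsummable hΦt
    exact ⟨f, hf, hsupp ▸ iUnion_subset hAG, htop⟩

theorem stmt19 (n : ℕ) (hn : 1 ≤ n)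
    (Φ : ℝ → ℝ) (hΦmono : MonotoneOn Φ (Set.Ioi 0)) (hΦpos : ∀ t : ℝ, 0 < t → 0 < Φ t) :
    (∃ f : EucSp n → ℝ, Integrable f ∧ {x | f x ≠ 0} ⊆ Gcube n ∧
        ∀ h : ℝ, 1 ≤ h → ∫⁻ x in {x | f x ≠ 0}, ENNReal.ofReal (Φ (|f x| / h)) = ⊤) ↔
      NonRegular Φ :=
  stmt19_general n hn Φ hΦmono

end
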